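/- (Individual-material gradient formulas, Section S.2.) Let B, R, q ≥ 1, let X_m, Y_m ∈ Matrix (Fin R) (Fin B) ℝ, D ∈ Matrix (Fin R) (Fin q) ℝ, E ∈ Matrix (Fin q) (Fin R) ℝ, and α : Fin q → ℝ with |(E·Y_m)_{k,b}| ≠ exp(α k) for all k, b, and set Z_{k,b} = Real.sign((E·Y_m)_{k,b}) · max(|(E·Y_m)_{k,b}| − exp(α k), 0). Define L(D, E, α) = (1/B) ∑_{r,b} ( (X_m)_{r,b} − (D·Z)_{r,b} )² where Z depends on E and α as above. Then, under the nondegeneracy condition, at (D, E, α) the partial Fréchet derivatives exist and are represented by the gradients: ∂L/∂D = −(2/B)(X_m − D·Z)·Zᵀ; ∂L/∂E has entries (∂L/∂E)_{k,j} = −(2/B) ∑_b (Dᵀ·(X_m − D·Z))_{k,b} · (if exp(α k) < |(E·Y_m)_{k,b}| then 1 else 0) · (Y_m)_{j,b}; and (∂L/∂α)_k = (2/B) ∑_b (Dᵀ·(X_m − D·Z))_{k,b} · exp(α k) · Real.sign(Z_{k,b}). -/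

import Mathlib

/-! The loss is a sum of squared residuals, so its derivative pairs `-(2/B) (X_m - D Z)` with the
derivative of `D Z`. When only `Z` moves, pairing the residual with `D δZ` is pairing
`Dᵀ (X_m - D Z)` with `δZ`. Away from `|E Y_m| = exp α`, each entry of `Z` is locally either `0` or
`s - exp (α k) · sign s` with the sign of `s` frozen, which gives the indicator as its derivative in
`s = (E Y_m) k b` and `-exp (α k) · sign Z` as its derivative in `α k`. -/

open Matrix

noncomputable def softThreshold (c s : ℝ) : ℝ := Real.sign s * max (|s| - c) 0

namespace softThreshold

variable {c s : ℝ}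

theorem eq_zero (h : |s| ≤ c) : softThreshold c s = 0 := by
  rw [softThreshold, max_eq_right (by linarith), mul_zero]

theorem eq_of_lt (h : c < |s|) : softThreshold c s = Real.sign s * (|s| - c) := by
  rw [softThreshold, max_eq_left (by linarith)]

theorem eq_sub_mul_sign (h : c < |s|) : softThreshold c s = s - c * Real.sign s := by
  rw [eq_of_lt h]
  rcases lt_trichotomy s 0 with hs | rfl | hs
  · rw [Real.sign_of_neg hs, abs_of_neg hs]; ring
  · simp
  · rw [Real.sign_of_pos hs, abs_of_pos hs]; ring

theorem sign_eq : Real.sign (softThreshold c s) = if c < |s| then Real.sign s else 0 := by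
  split_ifs with h
  · rw [eq_of_lt h]
    rcases lt_trichotomy s 0 with hs | rfl | hs
    · rw [Real.sign_of_neg hs, Real.sign_of_neg (by linarith)]
    · simp
    · rw [Real.sign_of_pos hs, Real.sign_of_pos (by linarith)]
  · rw [eq_zero (not_lt.1 h), Real.sign_zero]

end softThreshold

theorem Real.eventually_sign_eq {s : ℝ} (hs : s ≠ 0) :
    ∀ᶠ t in nhds s, Real.sign t = Real.sign s := by
  rcases hs.lt_or_gt with hs | hs
  · filter_upwards [gt_mem_nhds hs] with t ht
    rw [Real.sign_of_neg ht, Real.sign_of_neg hs]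
  · filter_upwards [lt_mem_nhds hs] with t ht
    rw [Real.sign_of_pos ht, Real.sign_of_pos hs]

theorem hasDerivAt_softThreshold {c s : ℝ} (hc : 0 ≤ c) (h : |s| ≠ c) :
    HasDerivAt (softThreshold c) (if c < |s| then 1 else 0) s := by
  split_ifs with hlt
  · have hs : s ≠ 0 := fun hs => by simp [hs] at hlt; linarith
    have hev : (fun t => t - c * Real.sign s) =ᶠ[nhds s] softThreshold c := by
      filter_upwards [(continuous_abs.tendsto s).eventually (lt_mem_nhds hlt),
        Real.eventually_sign_eq hs] with t ht hsign
      rw [softThreshold.eq_sub_mul_sign ht, hsign]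
    exact ((hasDerivAt_id s).sub_const _).congr_of_eventuallyEq hev.symm
  · have hev : (fun _ => (0 : ℝ)) =ᶠ[nhds s] softThreshold c := by
      filter_upwards [(continuous_abs.tendsto s).eventually
        (gt_mem_nhds ((not_lt.1 hlt).lt_of_ne h))] with t ht
      rw [softThreshold.eq_zero ht.le]
    exact (hasDerivAt_const s 0).congr_of_eventuallyEq hev.symm

theorem hasDerivAt_softThreshold_threshold {c s : ℝ} (h : |s| ≠ c) :
    HasDerivAt (fun c => softThreshold c s) (if c < |s| then -Real.sign s else 0) c := by
  split_ifs with hlt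
  · have hev : (fun c => Real.sign s * (|s| - c)) =ᶠ[nhds c] (fun c => softThreshold c s) := by
      filter_upwards [gt_mem_nhds hlt] with c' hc'
      rw [softThreshold.eq_of_lt hc']
    simpa using (((hasDerivAt_id c).const_sub |s|).const_mul (Real.sign s)).congr_of_eventuallyEq
      hev.symm
  · have hev : (fun _ => (0 : ℝ)) =ᶠ[nhds c] (fun c => softThreshold c s) := by
      filter_upwards [lt_mem_nhds ((not_lt.1 hlt).lt_of_ne h)] with c' hc'
      rw [softThreshold.eq_zero hc'.le]
    exact (hasDerivAt_const c 0).congr_of_eventuallyEq hev.symm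

theorem hasDerivAt_softThreshold_exp {s u : ℝ} (h : |s| ≠ Real.exp u) :
    HasDerivAt (fun a => softThreshold (Real.exp a) s)
      (-(Real.exp u * Real.sign (softThreshold (Real.exp u) s))) u := by
  refine ((hasDerivAt_softThreshold_threshold h).comp u (Real.hasDerivAt_exp u)).congr_deriv ?_
  rw [softThreshold.sign_eq]
  split_ifs <;> ring

section

variable {F : Type*} [NormedAddCommGroup F] [NormedSpace ℝ F] {ι κ β : Type*}
  [Fintype ι] [Fintype κ] [Fintype β]

theorem hasFDerivAt_sum_sq_residual (c : ℝ) (X : ι → β → ℝ) {P : F → ι → β → ℝ}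
    {P' : ι → β → F →L[ℝ] ℝ} {θ : F} (hP : ∀ i b, HasFDerivAt (fun θ => P θ i b) (P' i b) θ) :
    HasFDerivAt (fun θ => c * ∑ i, ∑ b, (X i b - P θ i b) ^ 2)
      (∑ i, ∑ b, (-(2 * c) * (X i b - P θ i b)) • P' i b) θ := by
  refine (HasFDerivAt.const_mul (HasFDerivAt.fun_sum fun i _ => HasFDerivAt.fun_sum fun b _ =>
    ((hP i b).const_sub (X i b)).pow 2) c).congr_fderiv ?_
  ext H
  simp only [_root_.smul_apply, _root_.sum_apply, _root_.neg_apply, smul_eq_mul, Finset.mul_sum]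
  refine Finset.sum_congr rfl fun i _ => Finset.sum_congr rfl fun b _ => ?_
  simp only [nsmul_eq_mul]
  ring

theorem hasFDerivAt_sum_sq_residual_mul (c : ℝ) (X : Matrix ι β ℝ) (D : Matrix ι κ ℝ)
    {W : F → Matrix κ β ℝ} {W' : κ → β → F →L[ℝ] ℝ} {θ : F}
    (hW : ∀ k b, HasFDerivAt (fun θ => W θ k b) (W' k b) θ) :
    HasFDerivAt (fun θ => c * ∑ i, ∑ b, (X i b - ∑ k, D i k * W θ k b) ^ 2)
      (∑ k, ∑ b, (-(2 * c) * (Dᵀ * (X - D * W θ)) k b) • W' k b) θ := by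
  refine (hasFDerivAt_sum_sq_residual c X (P' := fun i b => ∑ k, D i k • W' k b)
    fun i b => HasFDerivAt.fun_sum fun k _ => (hW k b).const_mul (D i k)).congr_fderiv ?_
  ext H
  simp only [_root_.smul_apply, _root_.sum_apply, smul_eq_mul,
    mul_apply, transpose_apply, Matrix.sub_apply, Finset.mul_sum, Finset.sum_mul]
  rw [Finset.sum_congr rfl fun i _ => Finset.sum_comm, Finset.sum_comm]
  refine Finset.sum_congr rfl fun k _ => ?_
  rw [Finset.sum_comm]
  exact Finset.sum_congr rfl fun b _ => Finset.sum_congr rfl fun i _ => by ring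

end

theorem hasFDerivAt_sum_apply_mul {ι κ : Type*} [Fintype ι] [Fintype κ] (i : ι) (w : κ → ℝ)
    (M : ι → κ → ℝ) :
    HasFDerivAt (fun M : ι → κ → ℝ => ∑ k, M i k * w k)
      (∑ k, w k • (ContinuousLinearMap.proj k).comp
        (ContinuousLinearMap.proj (R := ℝ) (φ := fun _ : ι => κ → ℝ) i)) M :=
  HasFDerivAt.fun_sum fun k _ =>
    ((ContinuousLinearMap.proj k).comp
      (ContinuousLinearMap.proj (R := ℝ) (φ := fun _ : ι => κ → ℝ) i)).hasFDerivAt.mul_const (w k)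

theorem hasFDerivAt_softThreshold_sum_apply_mul {ι κ : Type*} [Fintype ι] [Fintype κ] {c : ℝ}
    (hc : 0 ≤ c) (i : ι) (w : κ → ℝ) (M : ι → κ → ℝ) (h : |∑ k, M i k * w k| ≠ c) :
    HasFDerivAt (fun M : ι → κ → ℝ => softThreshold c (∑ k, M i k * w k))
      ((if c < |∑ k, M i k * w k| then (1 : ℝ) else 0) •
        ∑ k, w k • (ContinuousLinearMap.proj k).comp
          (ContinuousLinearMap.proj (R := ℝ) (φ := fun _ : ι => κ → ℝ) i)) M :=
  (hasDerivAt_softThreshold hc h).comp_hasFDerivAt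
    (f := fun M : ι → κ → ℝ => ∑ k, M i k * w k) M (hasFDerivAt_sum_apply_mul i w M)

theorem hasFDerivAt_softThreshold_exp_apply {ι : Type*} [Fintype ι] (i : ι) (s : ℝ) (a : ι → ℝ)
    (h : |s| ≠ Real.exp (a i)) :
    HasFDerivAt (fun a : ι → ℝ => softThreshold (Real.exp (a i)) s)
      (-(Real.exp (a i) * Real.sign (softThreshold (Real.exp (a i)) s)) •
        ContinuousLinearMap.proj (R := ℝ) i) a :=
  (hasDerivAt_softThreshold_exp h).comp_hasFDerivAt (f := fun a : ι → ℝ => a i) a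
    (hasFDerivAt_apply i a)

theorem individual_material_gradients_general (B R q : ℕ)
    (Xm Ym : Matrix (Fin R) (Fin B) ℝ)
    (D : Matrix (Fin R) (Fin q) ℝ) (E : Matrix (Fin q) (Fin R) ℝ)
    (α : Fin q → ℝ)
    (hnd : ∀ (k : Fin q) (b : Fin B), |(E * Ym) k b| ≠ Real.exp (α k))
    (Z : Matrix (Fin q) (Fin B) ℝ)
    (hZ : ∀ (k : Fin q) (b : Fin B),
      Z k b = Real.sign ((E * Ym) k b) * max (|(E * Ym) k b| - Real.exp (α k)) 0) :
    (∃ f : (Fin R → Fin q → ℝ) →L[ℝ] ℝ,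
      (∀ H : Fin R → Fin q → ℝ,
        f H = ∑ r : Fin R, ∑ k : Fin q,
          (-(2 / (B : ℝ)) * ∑ b : Fin B, (Xm r b - (D * Z) r b) * Z k b) * H r k) ∧
      HasFDerivAt
        (fun D' : Fin R → Fin q → ℝ =>
          (1 / (B : ℝ)) * ∑ r : Fin R, ∑ b : Fin B,
            (Xm r b - ∑ k : Fin q, D' r k * Z k b) ^ 2)
        f (fun r k => D r k))
    ∧
    (∃ g : (Fin q → Fin R → ℝ) →L[ℝ] ℝ,
      (∀ H : Fin q → Fin R → ℝ,
        g H = ∑ k : Fin q, ∑ j : Fin R,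
          (-(2 / (B : ℝ)) * ∑ b : Fin B,
            (Dᵀ * (Xm - D * Z)) k b
              * (if Real.exp (α k) < |(E * Ym) k b| then 1 else 0)
              * Ym j b) * H k j) ∧
      HasFDerivAt
        (fun E' : Fin q → Fin R → ℝ =>
          (1 / (B : ℝ)) * ∑ r : Fin R, ∑ b : Fin B,
            (Xm r b - ∑ k : Fin q,
              D r k * (Real.sign (∑ j : Fin R, E' k j * Ym j b)
                * max (|∑ j : Fin R, E' k j * Ym j b| - Real.exp (α k)) 0)) ^ 2)
        g (fun k j => E k j))
    ∧
    (∃ h : (Fin q → ℝ) →L[ℝ] ℝ,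
      (∀ v : Fin q → ℝ,
        h v = ∑ k : Fin q,
          ((2 / (B : ℝ)) * ∑ b : Fin B,
            (Dᵀ * (Xm - D * Z)) k b * Real.exp (α k) * Real.sign (Z k b)) * v k) ∧
      HasFDerivAt
        (fun a : Fin q → ℝ =>
          (1 / (B : ℝ)) * ∑ r : Fin R, ∑ b : Fin B,
            (Xm r b - ∑ k : Fin q,
              D r k * (Real.sign ((E * Ym) k b)
                * max (|(E * Ym) k b| - Real.exp (a k)) 0)) ^ 2)
        h α) := by
  have hZ' : ∀ k b, softThreshold (Real.exp (α k)) ((E * Ym) k b) = Z k b :=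
    fun k b => (hZ k b).symm
  refine ⟨?_, ?_, ?_⟩
  · have hD := hasFDerivAt_sum_sq_residual (1 / (B : ℝ)) Xm
      (P := fun D' r b => ∑ k, D' r k * Z k b) (θ := fun r k => D r k)
      fun r b => hasFDerivAt_sum_apply_mul r (Z · b) _
    refine ⟨_, fun H => ?_, hD⟩
    simp only [_root_.sum_apply, _root_.smul_apply, smul_eq_mul, ContinuousLinearMap.comp_apply,
      ContinuousLinearMap.proj_apply, mul_apply, Finset.mul_sum, Finset.sum_mul]
    refine Finset.sum_congr rfl fun r _ => ?_
    rw [Finset.sum_comm]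
    exact Finset.sum_congr rfl fun k _ => Finset.sum_congr rfl fun b _ => by ring
  · have hE := hasFDerivAt_sum_sq_residual_mul (1 / (B : ℝ)) Xm D
      (W := fun (E' : Fin q → Fin R → ℝ) k b =>
        softThreshold (Real.exp (α k)) (∑ j, E' k j * Ym j b))
      (θ := fun k j => E k j) fun k b =>
        hasFDerivAt_softThreshold_sum_apply_mul (Real.exp_pos _).le k (Ym · b) _ (hnd k b)
    refine ⟨_, fun H => ?_, hE⟩
    simp only [← mul_apply, hZ', _root_.sum_apply, _root_.smul_apply, smul_eq_mul,
      ContinuousLinearMap.comp_apply, ContinuousLinearMap.proj_apply, Finset.mul_sum,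
      Finset.sum_mul]
    refine Finset.sum_congr rfl fun k _ => ?_
    rw [Finset.sum_comm]
    exact Finset.sum_congr rfl fun j _ => Finset.sum_congr rfl fun b _ => by ring
  · have hα := hasFDerivAt_sum_sq_residual_mul (1 / (B : ℝ)) Xm D
      (W := fun (a : Fin q → ℝ) k b => softThreshold (Real.exp (a k)) ((E * Ym) k b)) fun k b =>
        hasFDerivAt_softThreshold_exp_apply k _ α (hnd k b)
    refine ⟨_, fun v => ?_, hα⟩
    simp only [hZ', _root_.sum_apply, _root_.smul_apply, smul_eq_mul,
      ContinuousLinearMap.proj_apply, Finset.mul_sum, Finset.sum_mul]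
    exact Finset.sum_congr rfl fun k _ => Finset.sum_congr rfl fun b _ => by ring

/-- Section S.2: the three partial Fréchet derivatives of the individual-material
training loss `L(D,E,α) = (1/B)‖X_m − D T_{exp(α1ᵀ)}(E Y_m)‖_F²`, under the
nondegeneracy condition `|E Y_m| ≠ exp(α)`:
`∂L/∂D = −(2/B)(X_m − DZ)Zᵀ`,
`∂L/∂E = −(2/B)[Dᵀ(X_m − DZ) ⊙ 1_{|EY_m| > exp(α1ᵀ)}]Y_mᵀ`, and
`∂L/∂α = (2/B){Dᵀ(X_m − DZ) ⊙ exp(α1ᵀ) ⊙ sign(Z)}1`. -/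
theorem individual_material_gradients (B R q : ℕ) (hB : 1 ≤ B) (hR : 1 ≤ R) (hq : 1 ≤ q)
    (Xm Ym : Matrix (Fin R) (Fin B) ℝ)
    (D : Matrix (Fin R) (Fin q) ℝ) (E : Matrix (Fin q) (Fin R) ℝ)
    (α : Fin q → ℝ)
    (hnd : ∀ (k : Fin q) (b : Fin B), |(E * Ym) k b| ≠ Real.exp (α k))
    (Z : Matrix (Fin q) (Fin B) ℝ)
    (hZ : ∀ (k : Fin q) (b : Fin B),
      Z k b = Real.sign ((E * Ym) k b) * max (|(E * Ym) k b| - Real.exp (α k)) 0) :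
    (∃ f : (Fin R → Fin q → ℝ) →L[ℝ] ℝ,
      (∀ H : Fin R → Fin q → ℝ,
        f H = ∑ r : Fin R, ∑ k : Fin q,
          (-(2 / (B : ℝ)) * ∑ b : Fin B, (Xm r b - (D * Z) r b) * Z k b) * H r k) ∧
      HasFDerivAt
        (fun D' : Fin R → Fin q → ℝ =>
          (1 / (B : ℝ)) * ∑ r : Fin R, ∑ b : Fin B,
            (Xm r b - ∑ k : Fin q, D' r k * Z k b) ^ 2)
        f (fun r k => D r k))
    ∧
    (∃ g : (Fin q → Fin R → ℝ) →L[ℝ] ℝ,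
      (∀ H : Fin q → Fin R → ℝ,
        g H = ∑ k : Fin q, ∑ j : Fin R,
          (-(2 / (B : ℝ)) * ∑ b : Fin B,
            (Dᵀ * (Xm - D * Z)) k b
              * (if Real.exp (α k) < |(E * Ym) k b| then 1 else 0)
              * Ym j b) * H k j) ∧
      HasFDerivAt
        (fun E' : Fin q → Fin R → ℝ =>
          (1 / (B : ℝ)) * ∑ r : Fin R, ∑ b : Fin B,
            (Xm r b - ∑ k : Fin q,
              D r k * (Real.sign (∑ j : Fin R, E' k j * Ym j b)
                * max (|∑ j : Fin R, E' k j * Ym j b| - Real.exp (α k)) 0)) ^ 2)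
        g (fun k j => E k j))
    ∧
    (∃ h : (Fin q → ℝ) →L[ℝ] ℝ,
      (∀ v : Fin q → ℝ,
        h v = ∑ k : Fin q,
          ((2 / (B : ℝ)) * ∑ b : Fin B,
            (Dᵀ * (Xm - D * Z)) k b * Real.exp (α k) * Real.sign (Z k b)) * v k) ∧
      HasFDerivAt
        (fun a : Fin q → ℝ =>
          (1 / (B : ℝ)) * ∑ r : Fin R, ∑ b : Fin B,
            (Xm r b - ∑ k : Fin q,
              D r k * (Real.sign ((E * Ym) k b)
                * max (|(E * Ym) k b| - Real.exp (a k)) 0)) ^ 2)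
        h α) :=
  individual_material_gradients_general B R q Xm Ym D E α hnd Z hZ
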